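/- Assume the sonic condition u₊²(ρ₊+n₊) = A₁γρ₊^γ + A₂αn₊^α and the pressure condition |A₁γρ₊^{γ−1} − A₂αn₊^{α−1}| ≤ √2·|u₊|·min{ (1+ρ₊/n₊)·((γ−1)A₁γρ₊^{γ−1})^{1/2}, (1+n₊/ρ₊)·((α−1)A₂αn₊^{α−1})^{1/2} }. Then both symmetric 2×2 matrices M₁ and M₂ are positive semidefinite. -/

import Mathlib

/-!
Write `c₁ = A₁γρ₊^{γ-1}` and `c₂ = A₂αn₊^{α-1}`. The sonic condition reads
`u₊²(ρ₊ + n₊) = c₁ρ₊ + c₂n₊`, i.e. `(u₊² - c₁)(1 + ρ₊/n₊) = c₂ - c₁`, so the pressure condition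
becomes `|u₊² - c₁| ≤ √2 |u₊| √((γ-1)c₁)`. Squared, this is exactly `det M₁ ≥ 0`, and
`M₁` has positive diagonal entry `ρ₊`. The case of `M₂` is the same with the two fluids swapped.
-/

open Matrix

/-- The symmetric matrix `M₁`. -/
noncomputable def M1 (A₁ γ ρp up : ℝ) : Matrix (Fin 2) (Fin 2) ℝ :=
  !![ρp, (up ^ 2 - A₁ * γ * ρp ^ (γ - 1)) / (2 * up);
     (up ^ 2 - A₁ * γ * ρp ^ (γ - 1)) / (2 * up), A₁ * γ * (γ - 1) * ρp ^ (γ - 2) / 2]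

/-- The symmetric matrix `M₂`. -/
noncomputable def M2 (A₂ α np up : ℝ) : Matrix (Fin 2) (Fin 2) ℝ :=
  !![np, (up ^ 2 - A₂ * α * np ^ (α - 1)) / (2 * up);
     (up ^ 2 - A₂ * α * np ^ (α - 1)) / (2 * up), A₂ * α * (α - 1) * np ^ (α - 2) / 2]

theorem Matrix.posSemidef_of_sq_le_mul {a b c : ℝ} (ha : 0 < a) (h : b ^ 2 ≤ a * c) :
    (!![a, b; b, c]).PosSemidef := by
  rw [posSemidef_iff_dotProduct_mulVec]
  refine ⟨?_, fun x => ?_⟩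
  · ext i j
    fin_cases i <;> fin_cases j <;> simp
  · have hform : 0 ≤ x 0 * (a * x 0 + b * x 1) + x 1 * (b * x 0 + c * x 1) := by
      nlinarith [sq_nonneg (a * x 0 + b * x 1), sq_nonneg (x 1)]
    simpa [mulVec, dotProduct, Fin.sum_univ_two] using hform

theorem M2_eq_M1 (A α n u : ℝ) : M2 A α n u = M1 A α n u := rfl

theorem M1_posSemidef {A γ ρ u : ℝ} (hρ : 0 < ρ) (hu : u ≠ 0)
    (h : (u ^ 2 - A * γ * ρ ^ (γ - 1)) ^ 2 ≤ 2 * u ^ 2 * ((γ - 1) * (A * γ * ρ ^ (γ - 1)))) :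
    (M1 A γ ρ u).PosSemidef := by
  refine posSemidef_of_sq_le_mul hρ ?_
  have hpow : ρ * ρ ^ (γ - 2) = ρ ^ (γ - 1) := by
    rw [show γ - 2 = γ - 1 - 1 by ring, Real.rpow_sub_one hρ.ne']
    field_simp
  have hdiag : ρ * (A * γ * (γ - 1) * ρ ^ (γ - 2) / 2) * (2 * u) ^ 2 =
      2 * u ^ 2 * ((γ - 1) * (A * γ * ρ ^ (γ - 1))) := by
    rw [← hpow]; ring
  rw [div_pow, div_le_iff₀ (by positivity), hdiag]
  exact h

theorem sq_sub_le_of_sonic {c₁ c₂ ρ n u k : ℝ} (hρ : 0 < ρ) (hn : 0 < n) (hk : 0 ≤ k)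
    (hson : u ^ 2 * (ρ + n) = c₁ * ρ + c₂ * n)
    (hp : |c₁ - c₂| ≤ √2 * |u| * ((1 + ρ / n) * √k)) :
    (u ^ 2 - c₁) ^ 2 ≤ 2 * u ^ 2 * k := by
  have hscale : 0 < 1 + ρ / n := by positivity
  have hdiff : (u ^ 2 - c₁) * (1 + ρ / n) = c₂ - c₁ := by
    field_simp
    linear_combination hson
  have habs : |u ^ 2 - c₁| ≤ √(2 * u ^ 2 * k) := by
    rw [Real.sqrt_mul (by positivity), Real.sqrt_mul (by norm_num), Real.sqrt_sq_eq_abs]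
    refine le_of_mul_le_mul_right ?_ hscale
    rw [← abs_of_pos hscale, ← abs_mul, hdiff, abs_sub_comm, abs_of_pos hscale]
    linarith
  rw [← sq_abs]
  exact (Real.le_sqrt (abs_nonneg _) (by positivity)).mp habs

theorem rpow_sub_one_mul_self {x : ℝ} (hx : 0 < x) (y : ℝ) : x ^ (y - 1) * x = x ^ y := by
  rw [Real.rpow_sub_one hx.ne']
  field_simp

/-- under the sonic condition and the pressure condition, both
`M₁` and `M₂` are positive semidefinite. -/
theorem stmt7 (A₁ A₂ γ α ρp np up : ℝ)
    (hA₁ : 0 < A₁) (hA₂ : 0 < A₂) (hγ : 1 ≤ γ) (hα : 1 ≤ α)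
    (hρ : 0 < ρp) (hn : 0 < np) (hu : up < 0)
    (hson : up ^ 2 * (ρp + np) = A₁ * γ * ρp ^ γ + A₂ * α * np ^ α)
    (hp : |A₁ * γ * ρp ^ (γ - 1) - A₂ * α * np ^ (α - 1)| ≤
      Real.sqrt 2 * |up| *
        min ((1 + ρp / np) * Real.sqrt ((γ - 1) * (A₁ * γ * ρp ^ (γ - 1))))
            ((1 + np / ρp) * Real.sqrt ((α - 1) * (A₂ * α * np ^ (α - 1))))) :
    (M1 A₁ γ ρp up).PosSemidef ∧ (M2 A₂ α np up).PosSemidef := by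
  set c₁ := A₁ * γ * ρp ^ (γ - 1)
  set c₂ := A₂ * α * np ^ (α - 1)
  have hk₁ : 0 ≤ (γ - 1) * c₁ := by have := Real.rpow_pos_of_pos hρ (γ - 1); positivity
  have hk₂ : 0 ≤ (α - 1) * c₂ := by have := Real.rpow_pos_of_pos hn (α - 1); positivity
  have hson' : up ^ 2 * (ρp + np) = c₁ * ρp + c₂ * np := by
    rw [hson, ← rpow_sub_one_mul_self hρ γ, ← rpow_sub_one_mul_self hn α]
    ring
  have hp₁ := hp.trans (mul_le_mul_of_nonneg_left (min_le_left _ _) (by positivity))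
  have hp₂ := hp.trans (mul_le_mul_of_nonneg_left (min_le_right _ _) (by positivity))
  rw [abs_sub_comm] at hp₂
  refine ⟨M1_posSemidef hρ hu.ne (sq_sub_le_of_sonic hρ hn hk₁ hson' hp₁), ?_⟩
  rw [M2_eq_M1]
  refine M1_posSemidef hn hu.ne (sq_sub_le_of_sonic hn hρ hk₂ ?_ hp₂)
  linear_combination hson'
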